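/- arXiv:2402.13242 — 2 statements merged into one kernel-verified Lean document; each statement's English description precedes it below -/
import Mathlib

section
/- The orthogonal basis f_j = Σ_{k=1}^{j} (1 + s² + … + s^{2k−2}) E_k satisfies (f_i, f_j) = δ_{ij} · s^{−2i+1}(1−s^{2i})(1−s^{2i+2})/(1−s²)² with respect to Squier's form, for s on the unit circle with s² ≠ 1. -/
/-!
Write `[k] = 1 + s² + ⋯ + s^(2k-2)`, so that `[k+1] = [k] + s^(2k)`. By this recursion the
coordinate `a < j` of `J f_j`, namely `-s [a] + (s + s⁻¹) [a+1] - s⁻¹ [a+2]`, vanishes, while its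
coordinate `j` is `s⁻¹ [j+2]` (0-indexed). Hence `(f_i, f_j) = 0` for `i < j`, and `i > j` follows
since `J` is Hermitian when `conj s = s⁻¹`. Finally `conj [k+1] = s^(-2k) [k+1]`, which gives
`(f_j, f_j) = s^(-2j-1) [j+1] [j+2]`.
-/

open Finset

section Field

variable {K : Type*} [Field K]

def qBracket (q : K) (k : ℕ) : K := ∑ t ∈ range k, q ^ t

lemma qBracket_zero (q : K) : qBracket q 0 = 0 := sum_range_zero _

lemma qBracket_succ (q : K) (k : ℕ) : qBracket q (k + 1) = qBracket q k + q ^ k :=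
  sum_range_succ _ _

lemma qBracket_sq_eq_sum (s : K) (k : ℕ) :
    qBracket (s ^ 2) k = ∑ t ∈ range k, s ^ (2 * t) := by
  simp only [qBracket, pow_mul]

lemma qBracket_eq_div {q : K} (hq : q ≠ 1) (k : ℕ) : qBracket q k = (q ^ k - 1) / (q - 1) :=
  geom_sum_eq hq k

def squierEntry (s : K) (a b : ℕ) : K :=
  if a = b then s + s⁻¹ else if a + 1 = b then -s⁻¹ else if b + 1 = a then -s else 0

/-- The paper's `f_(j+1)`, with coordinates indexed from `0`. -/
def squierVec (s : K) (j a : ℕ) : K := if a ≤ j then qBracket (s ^ 2) (a + 1) else 0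

lemma squierEntry_mul (s x : K) (a b : ℕ) :
    squierEntry s a b * x = (if b = a then (s + s⁻¹) * x else 0)
      + (if b = a + 1 then -s⁻¹ * x else 0) + (if b + 1 = a then -s * x else 0) := by
  unfold squierEntry
  split_ifs <;> first | ring1 | (exfalso; omega)

lemma sum_squierEntry_mul_squierVec {s : K} (hs0 : s ≠ 0) {N j a : ℕ} (hj : j < N)
    (ha : a ≤ j) :
    ∑ b ∈ range N, squierEntry s a b * squierVec s j b
      = if a = j then s⁻¹ * qBracket (s ^ 2) (j + 2) else 0 := by
  have hdiag : (∑ b ∈ range N, if b = a then (s + s⁻¹) * squierVec s j b else 0)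
      = (s + s⁻¹) * qBracket (s ^ 2) (a + 1) := by
    rw [sum_ite_eq', if_pos (mem_range.2 (by omega)), squierVec, if_pos ha]
  have hsuper : (∑ b ∈ range N, if b = a + 1 then -s⁻¹ * squierVec s j b else 0)
      = -s⁻¹ * squierVec s j (a + 1) := by
    rw [sum_ite_eq', ite_eq_left_iff]
    intro h
    rw [squierVec, if_neg (by simp at h; omega), mul_zero]
  have hsub : (∑ b ∈ range N, if b + 1 = a then -s * squierVec s j b else 0)
      = -s * qBracket (s ^ 2) a := by
    rcases a with _ | a
    · simp [qBracket_zero]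
    · simp only [Nat.add_right_cancel_iff]
      rw [sum_ite_eq', if_pos (mem_range.2 (by omega)), squierVec, if_pos (by omega)]
  simp only [squierEntry_mul, sum_add_distrib]
  rw [hdiag, hsuper, hsub, squierVec, qBracket_succ]
  rcases ha.lt_or_eq with hlt | rfl
  · rw [if_pos (Nat.succ_le_of_lt hlt), if_neg hlt.ne, qBracket_succ, qBracket_succ]
    field_simp
    ring
  · rw [if_neg (by omega), if_pos rfl, qBracket_succ, qBracket_succ]
    field_simp
    ring

end Field

section StarField

variable {K : Type*} [Field K] [StarRing K] {s : K}

lemma star_qBracket_sq (hs : star s = s⁻¹) (hs0 : s ≠ 0) (k : ℕ) :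
    star (qBracket (s ^ 2) (k + 1)) = qBracket (s ^ 2) (k + 1) / s ^ (2 * k) := by
  rw [eq_div_iff (pow_ne_zero _ hs0), qBracket, star_sum, sum_mul, ← sum_range_reflect]
  refine sum_congr rfl fun t ht => ?_
  have htk : t ≤ k := Nat.lt_succ_iff.1 (mem_range.1 ht)
  rw [star_pow, star_pow, hs, show 2 * k = 2 * t + 2 * (k - t) by omega, pow_add,
    Nat.add_sub_cancel, ← pow_mul, ← pow_mul, inv_pow]
  field_simp

def squierForm (s : K) (N : ℕ) (u v : ℕ → K) : K :=
  ∑ a ∈ range N, ∑ b ∈ range N, star (u a) * squierEntry s a b * v b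

lemma star_squierEntry (hs : star s = s⁻¹) (a b : ℕ) :
    star (squierEntry s a b) = squierEntry s b a := by
  unfold squierEntry
  split_ifs <;> first | (exfalso; omega) | simp [hs, star_inv₀, add_comm]

lemma squierForm_swap (hs : star s = s⁻¹) (N : ℕ) (u v : ℕ → K) :
    squierForm s N v u = star (squierForm s N u v) := by
  simp only [squierForm, star_sum, star_mul', star_star, star_squierEntry hs]
  rw [sum_comm]
  exact sum_congr rfl fun a _ => sum_congr rfl fun b _ => by ring

lemma squierForm_squierVec_of_le (hs : star s = s⁻¹) (hs0 : s ≠ 0) {N i j : ℕ} (hij : i ≤ j)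
    (hj : j < N) :
    squierForm s N (squierVec s i) (squierVec s j) = if i = j then
      qBracket (s ^ 2) (j + 1) * qBracket (s ^ 2) (j + 2) / s ^ (2 * j + 1) else 0 := by
  have hdiag : star (qBracket (s ^ 2) (j + 1)) * (s⁻¹ * qBracket (s ^ 2) (j + 2))
      = qBracket (s ^ 2) (j + 1) * qBracket (s ^ 2) (j + 2) / s ^ (2 * j + 1) := by
    rw [star_qBracket_sq hs hs0]
    field_simp
    ring
  have hrow : ∀ a ∈ range N,
      star (squierVec s i a) * ∑ b ∈ range N, squierEntry s a b * squierVec s j b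
        = if a = j then (if i = j then star (qBracket (s ^ 2) (j + 1)) *
            (s⁻¹ * qBracket (s ^ 2) (j + 2)) else 0) else 0 := by
    intro a _
    by_cases hai : a ≤ i
    · rw [sum_squierEntry_mul_squierVec hs0 hj (hai.trans hij), squierVec, if_pos hai]
      split_ifs <;> subst_vars <;> first | rfl | exact mul_zero _ | omega
    · rw [squierVec, if_neg hai, star_zero, zero_mul]
      split_ifs <;> first | rfl | omega
  simp only [squierForm, mul_assoc, ← mul_sum]
  rw [sum_congr rfl hrow, sum_ite_eq', if_pos (mem_range.2 hj), hdiag]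

lemma squierForm_squierVec (hs : star s = s⁻¹) (hs0 : s ≠ 0) {N i j : ℕ} (hi : i < N)
    (hj : j < N) :
    squierForm s N (squierVec s i) (squierVec s j) = if i = j then
      qBracket (s ^ 2) (j + 1) * qBracket (s ^ 2) (j + 2) / s ^ (2 * j + 1) else 0 := by
  rcases le_or_gt i j with hij | hji
  · exact squierForm_squierVec_of_le hs hs0 hij hj
  · rw [squierForm_swap hs, squierForm_squierVec_of_le hs hs0 hji.le hi, if_neg hji.ne,
      if_neg hji.ne', star_zero]

end StarField

open Matrix

/-- The vectors `f_j = Σ_{k=1}^{j} (1 + s² + ⋯ + s^{2k-2}) E_k` are orthogonal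
for Squier's form, with
`(f_i, f_j) = δ_{ij} s^{-2i+1}(1-s^{2i})(1-s^{2i+2})/(1-s²)²`
(here the basis is 0-indexed, so index `a` corresponds to `i = a + 1`). -/
theorem squier_orthogonal_basis (n : ℕ) (s : ℂ) (hs : ‖s‖ = 1)
    (hs2 : s ^ 2 ≠ 1)
    (J : Matrix (Fin (n - 1)) (Fin (n - 1)) ℂ)
    (hJ : ∀ a b : Fin (n - 1), J a b =
      if a = b then s + s⁻¹
      else if (a : ℕ) + 1 = (b : ℕ) then -s⁻¹
      else if (b : ℕ) + 1 = (a : ℕ) then -s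
      else 0)
    (f : Fin (n - 1) → Fin (n - 1) → ℂ)
    (hf : ∀ j a : Fin (n - 1), f j a =
      if (a : ℕ) ≤ (j : ℕ) then ∑ t ∈ Finset.range ((a : ℕ) + 1), s ^ (2 * t)
      else 0)
    (i j : Fin (n - 1)) :
    (∑ a, ∑ b, (starRingEnd ℂ) (f i a) * J a b * f j b) =
      (if i = j then
        s ^ (-(2 * ((i : ℤ) + 1)) + 1) *
          (1 - s ^ (2 * ((i : ℕ) + 1))) * (1 - s ^ (2 * ((i : ℕ) + 1) + 2)) /
          (1 - s ^ 2) ^ 2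
      else 0) := by
  have hstar : star s = s⁻¹ := (Complex.inv_eq_conj hs).symm
  have hs0 : s ≠ 0 := norm_ne_zero_iff.1 (hs ▸ one_ne_zero)
  have hform : (∑ a, ∑ b, (starRingEnd ℂ) (f i a) * J a b * f j b)
      = squierForm s (n - 1) (squierVec s i) (squierVec s j) := by
    rw [squierForm, ← Fin.sum_univ_eq_sum_range]
    refine sum_congr rfl fun a _ => ?_
    rw [← Fin.sum_univ_eq_sum_range]
    refine sum_congr rfl fun b _ => ?_
    simp only [hf, hJ, squierVec, squierEntry, qBracket_sq_eq_sum, Fin.ext_iff, starRingEnd_apply]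
  rw [hform, squierForm_squierVec hstar hs0 i.isLt j.isLt]
  rcases eq_or_ne i j with rfl | hij
  · have hzpow : s ^ (-(2 * ((i : ℤ) + 1)) + 1) = (s ^ (2 * (i : ℕ) + 1))⁻¹ := by
      rw [← zpow_natCast, ← _root_.zpow_neg]
      push_cast
      ring_nf
    have hs2' : 1 - s ^ 2 ≠ 0 := sub_ne_zero.2 hs2.symm
    rw [if_pos rfl, if_pos rfl, hzpow, qBracket_eq_div hs2, qBracket_eq_div hs2]
    field_simp
    ring
  · rw [if_neg (Fin.val_ne_of_ne hij), if_neg hij]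
end

section
/- The half-twist has the explicit form σ_1σ_2σ_1 = ((−1)^{3/4} e^{iπα(3α+2)/4}/(1 − e^{iπα})) · [[1, −1+2cos(πα)], [−1, −1]], for the matrices σ_1, σ_2 defined above. -/
open Matrix Complex

/-- `q^x = e^{iπx/2}` -/
noncomputable def qpow (x : ℂ) : ℂ := Complex.exp (Real.pi * Complex.I * x / 2)

/-- quantum integer `[x] = (q^x - q^{-x})/(q - q^{-1})` -/
noncomputable def qint (x : ℂ) : ℂ := (qpow x - qpow (-x)) / (qpow 1 - qpow (-1))

/-!
Put `s = q^α`. Since `q = i`, every quantum integer in `A` is a Laurent polynomial in `s`: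
`[α + 1] = (s + s⁻¹)/2`, `[3α + 3] = -(s³ + s⁻³)/2` (because `[x + 2] = -[x]`) and
`[2α] = (s² - s⁻²)/(2i)`. The identity `[α + 1]([α + 1] + [3α + 3]) = [2α]²` makes `A` an
involution, so `σ₁σ₂σ₁ = σ₁Aσ₁Aσ₁`, and with `σ₁ = q^{(α²+1)/2} · diag(s, s⁻¹)` the claim becomes
an identity of rational functions in `s`. Irrationality of `α` gives `s⁴ ≠ 1`, so none of the
denominators vanishes.
-/

lemma qpow_add (x y : ℂ) : qpow (x + y) = qpow x * qpow y := by
  rw [qpow, qpow, qpow, ← exp_add]; ring_nf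

lemma qpow_neg (x : ℂ) : qpow (-x) = (qpow x)⁻¹ := by
  rw [qpow, qpow, ← exp_neg]; ring_nf

lemma qpow_ne_zero (x : ℂ) : qpow x ≠ 0 := exp_ne_zero _

lemma qpow_nat_mul (n : ℕ) (x : ℂ) : qpow (n * x) = qpow x ^ n := by
  rw [qpow, qpow, ← exp_nat_mul]; ring_nf

lemma qpow_one : qpow 1 = I := by
  rw [qpow, show (Real.pi : ℂ) * I * 1 / 2 = (Real.pi / 2 : ℝ) * I by push_cast; ring,
    exp_mul_I, ← ofReal_cos, ← ofReal_sin, Real.cos_pi_div_two, Real.sin_pi_div_two]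
  simp

lemma qpow_two : qpow 2 = -1 := by
  rw [show (2 : ℂ) = 1 + 1 by norm_num, qpow_add, qpow_one, I_mul_I]

lemma qpow_pow_four_eq_one_iff (x : ℂ) : qpow x ^ 4 = 1 ↔ ∃ n : ℤ, x = n := by
  rw [← qpow_nat_mul, qpow, exp_eq_one_iff]
  refine exists_congr fun n => ⟨fun h => ?_, fun h => by rw [h]; ring⟩
  have : (2 * Real.pi * I : ℂ) ≠ 0 := by simp [Real.pi_ne_zero, I_ne_zero]
  exact mul_right_cancel₀ this (by linear_combination h)

lemma qpow_add_one_sq_div_two (x : ℂ) :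
    qpow ((x + 1) ^ 2 / 2) = qpow ((x ^ 2 + 1) / 2) * qpow x := by
  rw [← qpow_add]; ring_nf

lemma qpow_sub_one_sq_div_two (x : ℂ) :
    qpow ((x - 1) ^ 2 / 2) = qpow ((x ^ 2 + 1) / 2) * (qpow x)⁻¹ := by
  rw [← qpow_neg, ← qpow_add]; ring_nf

lemma exp_pi_mul_I_mul (x : ℂ) : exp (Real.pi * I * x) = qpow x ^ 2 := by
  rw [← qpow_nat_mul, qpow]; ring_nf

lemma ofReal_cos_pi_mul (x : ℝ) :
    (Real.cos (Real.pi * x) : ℂ) = (qpow x ^ 2 + (qpow x ^ 2)⁻¹) / 2 := by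
  rw [ofReal_cos, cos, ← exp_pi_mul_I_mul, ← exp_neg]; push_cast; ring_nf

lemma exp_three_pi_I_div_four_mul_exp (x : ℂ) :
    exp (3 * Real.pi * I / 4) * exp (Real.pi * I * x * (3 * x + 2) / 4) =
      qpow ((x ^ 2 + 1) / 2) ^ 3 * qpow x := by
  rw [← qpow_nat_mul, ← qpow_add, qpow, ← exp_add]; push_cast; ring_nf

lemma qint_eq_div (x : ℂ) : qint x = (qpow x - (qpow x)⁻¹) / (2 * I) := by
  rw [qint, qpow_neg, qpow_neg, qpow_one, inv_I]; ring

lemma qint_add_one (x : ℂ) : qint (x + 1) = (qpow x + (qpow x)⁻¹) / 2 := by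
  rw [qint_eq_div, qpow_add, qpow_one]
  field_simp
  rw [I_sq]
  ring

lemma qint_add_two (x : ℂ) : qint (x + 2) = -qint x := by
  rw [qint_eq_div, qint_eq_div, qpow_add, qpow_two]; ring

lemma qint_two_mul (x : ℂ) : qint (2 * x) = (qpow x ^ 2 - (qpow x ^ 2)⁻¹) / (2 * I) := by
  rw [qint_eq_div, ← qpow_nat_mul]; norm_num

lemma qint_three_mul_add_three (x : ℂ) :
    qint (3 * x + 3) = -((qpow x ^ 3 + (qpow x ^ 3)⁻¹) / 2) := by
  rw [show 3 * x + 3 = (3 * x + 1) + 2 by ring, qint_add_two, qint_add_one, ← qpow_nat_mul]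
  norm_num

lemma qint_two_mul_eq_zero_iff (x : ℂ) : qint (2 * x) = 0 ↔ qpow x ^ 4 = 1 := by
  rw [qint_two_mul, div_eq_zero_iff, or_iff_left (by simp [I_ne_zero]), sub_eq_zero,
    ← mul_eq_one_iff_eq_inv₀ (pow_ne_zero 2 (qpow_ne_zero x))]
  ring_nf

lemma qint_add_one_mul_add_qint_eq_sq (x : ℂ) :
    qint (x + 1) * (qint (x + 1) + qint (3 * x + 3)) = qint (2 * x) ^ 2 := by
  rw [qint_add_one, qint_three_mul_add_three, qint_two_mul, div_pow, mul_pow, I_sq]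
  have := qpow_ne_zero x
  field_simp
  ring

lemma smul_mul_self_fin_two {R : Type*} [CommRing R] (c a b : R) :
    (c • !![-a, b; a, a]) * (c • !![-a, b; a, a]) =
      (c ^ 2 * (a * (a + b))) • (1 : Matrix (Fin 2) (Fin 2) R) := by
  ext i j
  fin_cases i <;> fin_cases j <;> simp [Matrix.mul_apply, Fin.sum_univ_two] <;> ring

lemma half_twist_eq_of_pow_four_ne_one {s : ℂ} (k : ℂ) (hs : s ≠ 0) (hs4 : s ^ 4 ≠ 1) :
    !![k * s, 0; 0, k * s⁻¹] *
      ((((s ^ 2 - (s ^ 2)⁻¹) / (2 * I))⁻¹ •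
          !![-((s + s⁻¹) / 2), -((s ^ 3 + (s ^ 3)⁻¹) / 2); (s + s⁻¹) / 2, (s + s⁻¹) / 2]) *
        !![k * s, 0; 0, k * s⁻¹] *
        (((s ^ 2 - (s ^ 2)⁻¹) / (2 * I))⁻¹ •
          !![-((s + s⁻¹) / 2), -((s ^ 3 + (s ^ 3)⁻¹) / 2); (s + s⁻¹) / 2, (s + s⁻¹) / 2])) *
      !![k * s, 0; 0, k * s⁻¹] =
    (k ^ 3 * s / (1 - s ^ 2)) • !![1, -1 + 2 * ((s ^ 2 + (s ^ 2)⁻¹) / 2); -1, -1] := by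
  have h4 : s ^ 4 - 1 ≠ 0 := sub_ne_zero.mpr hs4
  have h2 : 1 - s ^ 2 ≠ 0 := fun h => h4 (by linear_combination (-(s ^ 2) - 1) * h)
  ext i j
  fin_cases i <;> fin_cases j <;>
    simp [Matrix.mul_apply, Fin.sum_univ_two] <;> field_simp <;> rw [I_sq] <;> ring

/-- Explicit form of the half-twist `σ₁σ₂σ₁`, where `(-1)^{3/4} = e^{3iπ/4}`. -/
theorem half_twist_explicit (α : ℝ) (hα : Irrational α)
    (σ₁ A σ₂ : Matrix (Fin 2) (Fin 2) ℂ)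
    (hσ₁ : σ₁ = !![qpow (((α : ℂ) + 1) ^ 2 / 2), 0; 0, qpow (((α : ℂ) - 1) ^ 2 / 2)])
    (hA : A = (qint (2 * (α : ℂ)))⁻¹ •
      !![-(qint ((α : ℂ) + 1)), qint (3 * (α : ℂ) + 3);
         qint ((α : ℂ) + 1), qint ((α : ℂ) + 1)])
    (hσ₂ : σ₂ = A⁻¹ * σ₁ * A) :
    σ₁ * σ₂ * σ₁ =
      (Complex.exp (3 * Real.pi * Complex.I / 4) *
        Complex.exp (Real.pi * Complex.I * (α : ℂ) * (3 * (α : ℂ) + 2) / 4) /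
        (1 - Complex.exp (Real.pi * Complex.I * (α : ℂ)))) •
      !![1, -1 + 2 * (Real.cos (Real.pi * α) : ℂ); -1, -1] := by
  have hs4 : qpow α ^ 4 ≠ 1 := by
    rw [Ne, qpow_pow_four_eq_one_iff]
    rintro ⟨n, hn⟩
    exact hα.ne_int n (by exact_mod_cast hn)
  have hA2 : A * A = 1 := by
    rw [hA, smul_mul_self_fin_two, qint_add_one_mul_add_qint_eq_sq, inv_pow,
      inv_mul_cancel₀ (pow_ne_zero 2 ((qint_two_mul_eq_zero_iff _).not.mpr hs4)), one_smul]
  rw [hσ₂, inv_eq_left_inv hA2, hσ₁, hA, qint_add_one, qint_two_mul, qint_three_mul_add_three,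
    qpow_add_one_sq_div_two, qpow_sub_one_sq_div_two, exp_three_pi_I_div_four_mul_exp,
    exp_pi_mul_I_mul, ofReal_cos_pi_mul]
  exact half_twist_eq_of_pow_four_ne_one _ (qpow_ne_zero _) hs4
end
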